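/- arXiv:2311.07629 — 2 statements merged into one kernel-verified Lean document; each statement's English description precedes it below -/
import Mathlib

section
/- For every ε > 0 there exists N such that for all n ≥ N the following holds: if G is a d-regular simple graph on n vertices with 1 ≤ d ≤ n^(2/3), then the second largest eigenvalue λ₂ of the adjacency matrix of G satisfies λ₂ ≥ (1 - ε) · √d / 2. -/
/-!
Let `t = λ₂` and `q = √d`. The quartic `p(x) = (x - t)(x + d)(x + a)²` is non-positive on
`[-d, t]`, which contains every eigenvalue but `λ₁ ≤ d`, so `∑ p(λᵢ) ≤ 2d (d - t)(d + a)²`.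
On the other hand `∑ p(λᵢ) = tr p(A)` is a combination of the closed-walk counts `tr Aᵏ`,
`k ≤ 4`: `tr A = 0`, `tr A² = nd`, `tr A³ ≥ 0` and, by Cauchy–Schwarz on the rows of `A²`,
`tr A⁴ ≥ nd² + (d² - d)²`. With `a = 8q/5` these two bounds contradict each other as soon as
`t ≤ q/2`, `n ≥ q³` (that is, `d ≤ n^(2/3)`) and `n ≥ 20000`.
-/

open scoped Classical

open Finset Matrix

theorem Matrix.IsHermitian.trace_pow_eq_sum_eigenvalues_pow {𝕜 n : Type*} [RCLike 𝕜]
    [Fintype n] [DecidableEq n] {A : Matrix n n 𝕜} (hA : A.IsHermitian) (k : ℕ) :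
    (A ^ k).trace = ∑ i, (hA.eigenvalues i : 𝕜) ^ k := by
  conv_lhs => rw [hA.spectral_theorem, ← map_pow, Unitary.conjStarAlgAut_apply, trace_mul_cycle,
    Unitary.coe_star_mul_self, one_mul, diagonal_pow, trace_diagonal]
  simp

section LinftyOpNorm

attribute [local instance] Matrix.linftyOpNormedRing Matrix.linftyOpNormedAlgebra

theorem SimpleGraph.abs_eigenvalues_adjMatrix_le {V : Type*} [Fintype V] [DecidableEq V]
    {G : SimpleGraph V} [DecidableRel G.Adj] {d : ℕ} (hd : ∀ v, G.degree v ≤ d)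
    (hA : (G.adjMatrix ℝ).IsHermitian) (i : V) : |hA.eigenvalues i| ≤ d := by
  have : Nonempty V := ⟨i⟩
  refine (spectrum.norm_le_norm_of_mem (hA.eigenvalues_mem_spectrum_real i)).trans ?_
  rw [linfty_opNorm_def, ← NNReal.coe_natCast, NNReal.coe_le_coe]
  refine Finset.sup_le fun v _ => ?_
  have := hd v
  rw [← G.card_neighborFinset_eq_degree, SimpleGraph.neighborFinset_eq_filter] at this
  simpa [SimpleGraph.adjMatrix_apply, apply_ite, ← NNReal.coe_le_coe] using this

end LinftyOpNorm

namespace SimpleGraph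
variable {V : Type*} [Fintype V] [DecidableEq V] {G : SimpleGraph V} [DecidableRel G.Adj] {d : ℕ}

theorem trace_adjMatrix_pow_nonneg {α : Type*} [Semiring α] [PartialOrder α] [IsOrderedRing α]
    (k : ℕ) : 0 ≤ (G.adjMatrix α ^ k).trace :=
  sum_nonneg fun v _ => by rw [diag_apply, adjMatrix_pow_apply_eq_card_walk]; positivity

theorem IsRegularOfDegree.adjMatrix_sq_apply_self {α : Type*} [Semiring α]
    (hG : G.IsRegularOfDegree d) (v : V) : (G.adjMatrix α ^ 2) v v = d := by
  rw [sq, adjMatrix_mul_self_apply_self, hG v]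

theorem IsRegularOfDegree.trace_adjMatrix_sq {α : Type*} [Semiring α]
    (hG : G.IsRegularOfDegree d) : (G.adjMatrix α ^ 2).trace = Fintype.card V * d := by
  simp [Matrix.trace, hG.adjMatrix_sq_apply_self]

theorem IsRegularOfDegree.sum_adjMatrix_sq_apply {α : Type*} [Semiring α]
    (hG : G.IsRegularOfDegree d) (v : V) : ∑ w, (G.adjMatrix α ^ 2) v w = d ^ 2 := by
  have hconst : G.adjMatrix α *ᵥ Function.const V 1 = Function.const V (d : α) := by
    ext w; simp [hG w]
  calc ∑ w, (G.adjMatrix α ^ 2) v w = (G.adjMatrix α ^ 2 *ᵥ Function.const V 1) v := by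
        simp [mulVec, dotProduct]
    _ = d ^ 2 := by
        rw [sq, ← mulVec_mulVec, hconst, adjMatrix_mulVec_const_apply_of_regular hG, sq]

theorem IsRegularOfDegree.le_trace_adjMatrix_pow_four [Nonempty V]
    (hG : G.IsRegularOfDegree d) :
    Fintype.card V * (d : ℝ) ^ 2 + ((d : ℝ) ^ 2 - d) ^ 2 ≤ (G.adjMatrix ℝ ^ 4).trace := by
  set B := G.adjMatrix ℝ ^ 2 with hB
  set n : ℝ := (Fintype.card V : ℝ)
  have hn : 0 < n := by positivity
  have hrow (v : V) : (d : ℝ) ^ 2 + ((d : ℝ) ^ 2 - d) ^ 2 / n ≤ ∑ w, B v w ^ 2 := by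
    have hdiag : B v v = d := hG.adjMatrix_sq_apply_self v
    have hoff : ∑ w ∈ univ.erase v, B v w = (d : ℝ) ^ 2 - d := by
      rw [← hG.sum_adjMatrix_sq_apply v, ← hB, ← add_sum_erase _ _ (mem_univ v), hdiag]
      ring
    have hcs := sq_sum_le_card_mul_sum_sq (s := univ.erase v) (f := fun w => B v w)
    have hcard : ((univ.erase v).card : ℝ) ≤ n := Nat.cast_le.mpr (card_le_univ _)
    have hS : 0 ≤ ∑ w ∈ univ.erase v, B v w ^ 2 := sum_nonneg fun w _ => sq_nonneg _
    rw [hoff] at hcs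
    rw [← add_sum_erase _ _ (mem_univ v), hdiag, add_le_add_iff_left, div_le_iff₀ hn]
    nlinarith
  have htrace : (G.adjMatrix ℝ ^ 4).trace = ∑ v, ∑ w, B v w ^ 2 := by
    have hsymm : B.IsSymm := G.isSymm_adjMatrix.pow 2
    rw [show 4 = 2 + 2 from rfl, pow_add, ← hB]
    refine sum_congr rfl fun v _ => ?_
    rw [diag_apply, mul_apply]
    exact sum_congr rfl fun w _ => by rw [hsymm.apply v w, ← sq]
  calc n * (d : ℝ) ^ 2 + ((d : ℝ) ^ 2 - d) ^ 2
      = ∑ _v : V, ((d : ℝ) ^ 2 + ((d : ℝ) ^ 2 - d) ^ 2 / n) := by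
        rw [sum_const, card_univ, nsmul_eq_mul]; field_simp; ring
    _ ≤ _ := htrace ▸ sum_le_sum fun v _ => hrow v

end SimpleGraph

section TestPolynomial

variable {x d t a : ℝ}

theorem sub_mul_add_mul_add_sq_nonpos (hx : -d ≤ x) (hxt : x ≤ t) :
    (x - t) * (x + d) * (x + a) ^ 2 ≤ 0 :=
  mul_nonpos_of_nonpos_of_nonneg (mul_nonpos_of_nonpos_of_nonneg (by linarith) (by linarith))
    (sq_nonneg _)

theorem sub_mul_add_mul_add_sq_le (hx : |x| ≤ d) (htd : t ≤ d) (ha : 0 ≤ a) :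
    (x - t) * (x + d) * (x + a) ^ 2 ≤ (d - t) * (2 * d) * (d + a) ^ 2 := by
  obtain ⟨hx₁, hx₂⟩ := abs_le.mp hx
  rcases le_total t x with hxt | hxt
  · calc (x - t) * (x + d) * (x + a) ^ 2 ≤ (x - t) * (x + d) * (d + a) ^ 2 :=
          mul_le_mul_of_nonneg_left (sq_le_sq' (by linarith) (by linarith))
            (mul_nonneg (by linarith) (by linarith))
      _ ≤ (d - t) * (2 * d) * (d + a) ^ 2 :=
          mul_le_mul_of_nonneg_right
            (mul_le_mul (by linarith) (by linarith) (by linarith) (by linarith)) (sq_nonneg _)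
  · exact (sub_mul_add_mul_add_sq_nonpos hx₁ hxt).trans
      (mul_nonneg (mul_nonneg (by linarith) (by linarith)) (sq_nonneg _))

theorem sum_sub_mul_add_mul_add_sq_le {ι : Type*} [Fintype ι] {μ : ι → ℝ} {i₀ : ι}
    (hμ : ∀ i, |μ i| ≤ d) (ht : ∀ i ≠ i₀, μ i ≤ t) (htd : t ≤ d) (ha : 0 ≤ a) :
    ∑ i, (μ i - t) * (μ i + d) * (μ i + a) ^ 2 ≤ (d - t) * (2 * d) * (d + a) ^ 2 := by
  rw [← add_sum_erase _ _ (mem_univ i₀)]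
  have hrest : ∑ i ∈ univ.erase i₀, (μ i - t) * (μ i + d) * (μ i + a) ^ 2 ≤ 0 :=
    sum_nonpos fun i hi =>
      sub_mul_add_mul_add_sq_nonpos (abs_le.mp (hμ i)).1 (ht i (ne_of_mem_erase hi))
  linarith [sub_mul_add_mul_add_sq_le (a := a) (hμ i₀) htd ha]

end TestPolynomial

/-- With `d = q²` and `a = 8q/5`, the left side is the upper bound on `∑ p(λᵢ)` from
`sum_sub_mul_add_mul_add_sq_le` and the right side the lower bound given by the moments. -/
theorem moment_bounds_separate {q n t : ℝ} (hq : 1 ≤ q) (hn : 20000 ≤ n) (hqn : q ^ 3 ≤ n)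
    (ht : t ≤ q / 2) :
    (q ^ 2 - t) * (2 * q ^ 2) * (q ^ 2 + 8 / 5 * q) ^ 2 <
      n * q ^ 4 + (q ^ 4 - q ^ 2) ^ 2
        + ((8 / 5 * q) ^ 2 + 2 * (8 / 5 * q) * (q ^ 2 - t) - t * q ^ 2) * (n * q ^ 2)
        - n * (8 / 5 * q) ^ 2 * t * q ^ 2 := by
  have hslope : 2 * (q ^ 2 + 8 / 5 * q) ^ 2 ≤ n * (16 / 5 * q + 89 / 25 * q ^ 2) := by
    rcases le_total q 10 with hq10 | hq10 <;> nlinarith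
  have hbase : q ^ 4 + 27 / 5 * q ^ 3 + 98 / 25 * q ^ 2 - 64 / 25 * q - 1
      < n * (49 / 25 + 71 / 50 * q) := by
    rcases le_total q 10 with hq10 | hq10 <;> nlinarith
  -- The difference of the two sides is exactly the sum of these two terms.
  have h₁ := mul_pos (pow_pos (by linarith : 0 < q) 4) (sub_pos.mpr hbase)
  have h₂ := mul_nonneg (mul_nonneg (sub_nonneg.mpr ht) (sq_nonneg q)) (sub_nonneg.mpr hslope)
  linarith

theorem sqrt_div_two_lt_of_moments {ι : Type*} [Fintype ι] {μ : ι → ℝ} {d t : ℝ} {i₀ : ι}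
    (hd : 1 ≤ d) (hι : 20000 ≤ Fintype.card ι) (hdι : d ^ 3 ≤ (Fintype.card ι : ℝ) ^ 2)
    (hμ : ∀ i, |μ i| ≤ d) (ht : ∀ i ≠ i₀, μ i ≤ t)
    (h₁ : ∑ i, μ i = 0) (h₂ : ∑ i, μ i ^ 2 = Fintype.card ι * d) (h₃ : 0 ≤ ∑ i, μ i ^ 3)
    (h₄ : Fintype.card ι * d ^ 2 + (d ^ 2 - d) ^ 2 ≤ ∑ i, μ i ^ 4) :
    √d / 2 < t := by
  obtain ⟨q, hq, rfl⟩ : ∃ q : ℝ, 1 ≤ q ∧ d = q ^ 2 :=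
    ⟨√d, Real.one_le_sqrt.mpr hd, (Real.sq_sqrt (by linarith)).symm⟩
  rw [Real.sqrt_sq (by linarith)]
  by_contra! htq
  have hn : (20000 : ℝ) ≤ Fintype.card ι := mod_cast hι
  have hqn : q ^ 3 ≤ Fintype.card ι := by
    refine le_of_pow_le_pow_left₀ two_ne_zero (by positivity) ?_
    rwa [← pow_mul, mul_comm, pow_mul]
  have hupper :=
    sum_sub_mul_add_mul_add_sq_le (a := 8 / 5 * q) hμ ht (by nlinarith) (by positivity)
  have hquartic (x : ℝ) : (x - t) * (x + q ^ 2) * (x + 8 / 5 * q) ^ 2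
      = x ^ 4 + (16 / 5 * q + q ^ 2 - t) * x ^ 3
        + ((8 / 5 * q) ^ 2 + 2 * (8 / 5 * q) * (q ^ 2 - t) - t * q ^ 2) * x ^ 2
        + ((q ^ 2 - t) * (8 / 5 * q) ^ 2 - 2 * (8 / 5 * q) * t * q ^ 2) * x
        - (8 / 5 * q) ^ 2 * t * q ^ 2 := by
    ring
  simp only [hquartic, sum_add_distrib, sum_sub_distrib, ← mul_sum, sum_const, card_univ,
    nsmul_eq_mul, h₁, h₂] at hupper
  have hcubic : 0 ≤ (16 / 5 * q + q ^ 2 - t) * ∑ i, μ i ^ 3 := mul_nonneg (by nlinarith) h₃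
  exact (moment_bounds_separate hq hn hqn htq).not_ge (by linarith)

/-- For every `ε > 0` there exists `N` such that for all `n ≥ N`:
if `G` is a `d`-regular simple graph on `n` vertices with `1 ≤ d ≤ n^(2/3)`, then the
second largest eigenvalue `λ₂` of the adjacency matrix of `G` satisfies
`λ₂ ≥ (1 - ε) · √d / 2`. Here `μ` lists the eigenvalues of the adjacency matrix in
decreasing order, so `λ₂ = μ 1`. -/
theorem stmt_0 (ε : ℝ) (hε : 0 < ε) :
    ∃ N : ℕ, ∀ n : ℕ, N ≤ n → ∀ (hn : 2 ≤ n) (d : ℕ) (G : SimpleGraph (Fin n))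
      (hA : (G.adjMatrix ℝ).IsHermitian) (μ : Fin n → ℝ),
      Antitone μ →
      (∃ σ : Equiv.Perm (Fin n), μ = hA.eigenvalues ∘ σ) →
      G.IsRegularOfDegree d →
      1 ≤ d → (d : ℝ) ≤ (n : ℝ) ^ ((2 : ℝ) / 3) →
      μ ⟨1, by omega⟩ ≥ (1 - ε) * Real.sqrt d / 2 := by
  refine ⟨20000, fun n hN hn d G hA μ hμ ⟨σ, hσ⟩ hG hd hdn => ?_⟩
  have hmoment (k : ℕ) : ∑ i, μ i ^ k = (G.adjMatrix ℝ ^ k).trace := by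
    rw [hA.trace_pow_eq_sum_eigenvalues_pow, hσ]
    exact Equiv.sum_comp σ (fun i => hA.eigenvalues i ^ k)
  have hd3 : (d : ℝ) ^ 3 ≤ (n : ℝ) ^ 2 := by
    calc (d : ℝ) ^ 3 ≤ ((n : ℝ) ^ ((2 : ℝ) / 3)) ^ 3 := by gcongr
      _ = (n : ℝ) ^ 2 := by rw [← Real.rpow_mul_natCast (by positivity)]; norm_num
  have hsecond : √d / 2 < μ ⟨1, by omega⟩ := by
    refine sqrt_div_two_lt_of_moments (μ := μ) (i₀ := ⟨0, by omega⟩) (by exact_mod_cast hd)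
      (by simpa using hN) (by simpa using hd3) ?_ ?_ ?_ ?_ ?_ ?_
    · intro i; rw [hσ]; exact G.abs_eigenvalues_adjMatrix_le (fun v => (hG v).le) hA (σ i)
    · exact fun i hi => hμ (Fin.mk_le_of_le_val (Nat.pos_of_ne_zero (Fin.val_ne_iff.mpr hi)))
    · simpa using hmoment 1
    · simpa [hG.trace_adjMatrix_sq] using hmoment 2
    · exact (hmoment 3).symm ▸ G.trace_adjMatrix_pow_nonneg 3
    · have : Nonempty (Fin n) := ⟨⟨0, by omega⟩⟩
      simpa [hmoment 4] using hG.le_trace_adjMatrix_pow_four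
  have hsqrt := Real.sqrt_nonneg (d : ℝ)
  exact le_trans (by nlinarith) hsecond.le
end

section
/- Let G be a d-regular simple graph on n vertices with 1 ≤ d, let A be its adjacency matrix, let λ₂ ≥ 0 be the second largest eigenvalue of A, set p = d/n, α = p/(λ₂ + p) and β = 1/(λ₂ + p). Then the real symmetric matrix (1 − α²)·I + (β² − 2αβ)·A + α²·J, where I is the n×n identity matrix and J is the n×n all-ones matrix, is positive semidefinite. -/
/-!
With `α = β p` and `1 - α = β λ₂`, the matrix `M = (1 - α) I - β A + α J` equals
`β (λ₂ I - A + p J)`, and its entrywise square is the matrix of the theorem because `A` is a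
0/1 matrix with zero diagonal. By Schur's product theorem it suffices that
`λ₂ I - A + (d/n) J` is positive semidefinite. In an orthonormal eigenbasis of `A` this is a
statement about a diagonal matrix plus the rank-one matrix `d/‖u‖² · u uᵀ`, where `u` is the
all-ones vector, an eigenvector for the top eigenvalue `d`: either every eigenvalue of `A` is at
most `λ₂`, or the top eigenvalue is simple, `u` spans its eigenspace, and the rank-one term
exactly replaces `d` by `λ₂` on that line.
-/

open Matrix

lemma posSemidef_smul_one_sub_diagonal_add_vecMulVec {ι : Type*} [Fintype ι] [DecidableEq ι]
    {ν v : ι → ℝ} {i₀ : ι} {lam d : ℝ} (hlam : 0 ≤ lam) (hd : 0 ≤ d)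
    (hν : ∀ i, ν i ≤ d) (hν₀ : ∀ i ≠ i₀, ν i ≤ lam) (hv : ∀ i, ν i * v i = d * v i)
    (hv₀ : v ≠ 0) :
    (lam • 1 - diagonal ν + (d / (v ⬝ᵥ v)) • vecMulVec v v).PosSemidef := by
  rcases le_or_gt (ν i₀) lam with h | h
  · have hle : ∀ i, ν i ≤ lam := fun i => by
      rcases eq_or_ne i i₀ with rfl | hi
      exacts [h, hν₀ i hi]
    refine PosSemidef.add ?_ ((posSemidef_vecMulVec_self_star v).smul ?_)
    · rw [smul_one_eq_diagonal, diagonal_sub, posSemidef_diagonal_iff]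
      exact fun i => sub_nonneg.2 (hle i)
    · exact div_nonneg hd (dotProduct_self_star_nonneg v)
  · -- `v i ≠ 0` forces `ν i = d`, impossible for `i ≠ i₀` since `ν i ≤ lam < ν i₀ ≤ d`
    obtain ⟨c, rfl⟩ : ∃ c, v = Pi.single i₀ c := by
      refine ⟨v i₀, funext fun i => ?_⟩
      rcases eq_or_ne i i₀ with rfl | hi
      · simp
      · rw [Pi.single_eq_of_ne hi]
        by_contra hvi
        linarith [hν i₀, hν₀ i hi, mul_right_cancel₀ hvi (hv i)]
    have hc : c ≠ 0 := by simpa using hv₀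
    have hrank_one : (d / (Pi.single i₀ c ⬝ᵥ Pi.single i₀ c)) •
        vecMulVec (Pi.single i₀ c) (Pi.single i₀ c) = diagonal (Pi.single i₀ d) := by
      clear hv hν₀ hv₀
      ext i j
      simp only [Matrix.smul_apply, vecMulVec_apply, diagonal_apply, Pi.single_apply]
      split_ifs <;> simp_all
    rw [hrank_one, smul_one_eq_diagonal, diagonal_sub, diagonal_add, posSemidef_diagonal_iff]
    intro i
    rcases eq_or_ne i i₀ with rfl | hi
    · simp only [Pi.single_eq_same]
      linarith [hν i]
    · simp [Pi.single_eq_of_ne hi, hν₀ i hi]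

lemma Matrix.IsHermitian.posSemidef_smul_one_sub_add_vecMulVec {ι : Type*} [Fintype ι]
    [DecidableEq ι] {A : Matrix ι ι ℝ} (hA : A.IsHermitian) {u : ι → ℝ} {i₀ : ι} {lam d : ℝ}
    (hlam : 0 ≤ lam) (hd : 0 ≤ d) (hν : ∀ i, hA.eigenvalues i ≤ d)
    (hν₀ : ∀ i ≠ i₀, hA.eigenvalues i ≤ lam) (hu : A *ᵥ u = d • u) (hu₀ : u ≠ 0) :
    (lam • 1 - A + (d / (u ⬝ᵥ u)) • vecMulVec u u).PosSemidef := by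
  set U : Matrix ι ι ℝ := (hA.eigenvectorUnitary : Matrix ι ι ℝ)
  have hUU : U * star U = 1 := Unitary.mul_star_self_of_mem hA.eigenvectorUnitary.2
  have hUU' : star U * U = 1 := Unitary.star_mul_self_of_mem hA.eigenvectorUnitary.2
  have hdiag : star U * A * U = diagonal hA.eigenvalues := by
    simpa using hA.conjStarAlgAut_star_eigenvectorUnitary
  set v := star U *ᵥ u
  have hvecMul : u ᵥ* U = v := by
    rw [← mulVec_transpose]
    rfl
  have hvv : v ⬝ᵥ v = u ⬝ᵥ u := by
    nth_rewrite 1 [← hvecMul]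
    rw [← dotProduct_mulVec, mulVec_mulVec, hUU, one_mulVec]
  have hv : ∀ i, hA.eigenvalues i * v i = d * v i := by
    have : diagonal hA.eigenvalues *ᵥ v = d • v := by
      rw [← hdiag, mulVec_mulVec, mul_assoc, hUU, mul_one, ← mulVec_mulVec, hu, mulVec_smul]
    intro i
    simpa only [mulVec_diagonal, Pi.smul_apply, smul_eq_mul] using congrFun this i
  have hv₀ : v ≠ 0 := by
    intro h
    apply hu₀
    rw [← one_mulVec u, ← hUU, ← mulVec_mulVec]
    exact (congrArg (U *ᵥ ·) h).trans (mulVec_zero U)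
  have hconj : star U * (lam • 1 - A + (d / (u ⬝ᵥ u)) • vecMulVec u u) * U
      = lam • 1 - diagonal hA.eigenvalues + (d / (v ⬝ᵥ v)) • vecMulVec v v := by
    rw [hvv, mul_add, add_mul, mul_sub, sub_mul, hdiag, Matrix.mul_smul, Matrix.smul_mul, mul_one,
      hUU', Matrix.mul_smul, Matrix.smul_mul, mul_vecMulVec, vecMulVec_mul, hvecMul]
  rw [← Unitary.isUnit_coe.posSemidef_star_left_conjugate_iff, hconj]
  exact posSemidef_smul_one_sub_diagonal_add_vecMulVec hlam hd hν hν₀ hv hv₀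

lemma SimpleGraph.IsRegularOfDegree.eigenvalues_le {V : Type*} [Fintype V] [DecidableEq V]
    {G : SimpleGraph V} [DecidableRel G.Adj] {d : ℕ} (hG : G.IsRegularOfDegree d)
    (hA : (G.adjMatrix ℝ).IsHermitian) (i : V) : hA.eigenvalues i ≤ d := by
  have hev : Module.End.HasEigenvalue (toLin' (G.adjMatrix ℝ)) (hA.eigenvalues i) := by
    rw [Module.End.hasEigenvalue_iff_mem_spectrum, spectrum_toLin']
    exact hA.eigenvalues_mem_spectrum_real i
  obtain ⟨k, hk⟩ := eigenvalue_mem_ball hev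
  have hrow : ∑ j ∈ Finset.univ.erase k, ‖G.adjMatrix ℝ k j‖ = d := by
    rw [Finset.sum_erase _ (by simp)]
    simp [apply_ite, Finset.sum_boole, ← neighborFinset_eq_filter, hG k]
  rw [Metric.mem_closedBall, hrow, adjMatrix_apply, if_neg G.irrefl, Real.dist_eq,
    sub_zero] at hk
  exact (abs_le.mp hk).2

lemma SimpleGraph.IsRegularOfDegree.adjMatrix_mulVec_one {V R : Type*} [Fintype V]
    [NonAssocSemiring R] {G : SimpleGraph V} [DecidableRel G.Adj] {d : ℕ}
    (hG : G.IsRegularOfDegree d) : G.adjMatrix R *ᵥ 1 = (d : R) • 1 := by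
  ext v
  simpa using G.adjMatrix_mulVec_const_apply_of_regular (a := (1 : R)) hG (v := v)

lemma SimpleGraph.smul_one_sub_smul_adjMatrix_add_smul_hadamard_self {V R : Type*}
    [DecidableEq V] [CommRing R] (G : SimpleGraph V) [DecidableRel G.Adj] (a b c : R) :
    (a • 1 - b • G.adjMatrix R + c • of fun _ _ => 1) ⊙
        (a • 1 - b • G.adjMatrix R + c • of fun _ _ => 1) =
      (a ^ 2 + 2 * a * c) • (1 : Matrix V V R) + (b ^ 2 - 2 * b * c) • G.adjMatrix R +
        c ^ 2 • of fun _ _ => 1 := by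
  ext i j
  rcases eq_or_ne i j with rfl | hij
  · simp
    ring
  · by_cases h : G.Adj i j <;> simp [hij, h] <;> ring

lemma Antitone.apply_le_of_eq_comp_perm {ι α : Type*} [Preorder ι] [Preorder α] {μ f : ι → α}
    (hμ : Antitone μ) {σ : Equiv.Perm ι} (hσ : μ = f ∘ σ) {i₀ i₁ : ι}
    (h₁ : ∀ j ≠ i₀, i₁ ≤ j) {i : ι} (hi : i ≠ σ i₀) : f i ≤ μ i₁ := by
  rw [show f i = μ (σ.symm i) by simp [hσ]]
  exact hμ (h₁ _ fun h => hi (by rw [← h, Equiv.apply_symm_apply]))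

/-- Let `G` be a `d`-regular simple graph on `n ≥ 2` vertices with
`1 ≤ d`, let `A` be its adjacency matrix, let `λ₂ = μ 1 ≥ 0` be its second largest
eigenvalue (where `μ` lists the eigenvalues in decreasing order), and set `p = d/n`,
`α = p/(λ₂ + p)`, `β = 1/(λ₂ + p)`. Then the matrix
`(1 − α²)·I + (β² − 2αβ)·A + α²·J` (with `J` the all-ones matrix), i.e. the entrywise
square `M ∘ M` of `M = (1 − α)·I − β·A + α·J`, is positive semidefinite. -/
theorem stmt_12 (n d : ℕ) (hn : 2 ≤ n) (hd : 1 ≤ d)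
    (G : SimpleGraph (Fin n)) [DecidableRel G.Adj]
    (hreg : G.IsRegularOfDegree d)
    (hA : (G.adjMatrix ℝ).IsHermitian)
    (μ : Fin n → ℝ) (hμ : Antitone μ)
    (hperm : ∃ σ : Equiv.Perm (Fin n), μ = hA.eigenvalues ∘ σ)
    (hmu2 : 0 ≤ μ ⟨1, by omega⟩)
    (p α β : ℝ)
    (hp : p = (d : ℝ) / n)
    (hα : α = p / (μ ⟨1, by omega⟩ + p))
    (hβ : β = 1 / (μ ⟨1, by omega⟩ + p)) :
    ((1 - α ^ 2) • (1 : Matrix (Fin n) (Fin n) ℝ) + (β ^ 2 - 2 * α * β) • G.adjMatrix ℝ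
        + α ^ 2 • Matrix.of (fun _ _ => (1 : ℝ))).PosSemidef := by
  obtain ⟨σ, hσ⟩ := hperm
  set lam := μ ⟨1, by omega⟩
  have hsecond : ∀ i ≠ σ ⟨0, by omega⟩, hA.eigenvalues i ≤ lam := fun i hi =>
    hμ.apply_le_of_eq_comp_perm hσ
      (fun j hj => Fin.le_def.2 (Nat.one_le_iff_ne_zero.2 (Fin.val_ne_of_ne hj))) hi
  have hp₀ : 0 < p := by rw [hp]; positivity
  have hαβ : α = β * p := by rw [hα, hβ]; field_simp
  have h1α : 1 - α = β * lam := by rw [hα, hβ]; field_simp; ring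
  have hJ : (of fun _ _ => 1 : Matrix (Fin n) (Fin n) ℝ) = vecMulVec 1 1 := by ext; simp
  have hpJ : p = d / ((1 : Fin n → ℝ) ⬝ᵥ 1) := by simp [hp]
  have hcore : (lam • 1 - G.adjMatrix ℝ + p • vecMulVec 1 1).PosSemidef := by
    rw [hpJ]
    exact hA.posSemidef_smul_one_sub_add_vecMulVec hmu2 (by positivity) (hreg.eigenvalues_le hA)
      hsecond hreg.adjMatrix_mulVec_one fun h => one_ne_zero (congrFun h ⟨0, by omega⟩)
  have hM : ((1 - α) • 1 - β • G.adjMatrix ℝ + α • of fun _ _ => (1 : ℝ)).PosSemidef := by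
    convert hcore.smul (show 0 ≤ β by rw [hβ]; positivity) using 1
    rw [h1α, hαβ, hJ]
    module
  have hMM := hM.hadamard hM
  rwa [G.smul_one_sub_smul_adjMatrix_add_smul_hadamard_self,
    show (1 - α) ^ 2 + 2 * (1 - α) * α = 1 - α ^ 2 by ring,
    show β ^ 2 - 2 * β * α = β ^ 2 - 2 * α * β by ring] at hMM
end
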